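/- For any two distinct letters a, b of {0,1,2}, there exists an infinite squarefree word over {0,1,2} that avoids the word aba (contains no occurrence of aba as a subword). -/
import Mathlib

def Occurs (u w : List (Fin 3)) : Prop := u <:+: w

def SqFree (w : List (Fin 3)) : Prop :=
  ∀ x : List (Fin 3), x ≠ [] → ¬ Occurs (x ++ x) w

def OccursInf (u : List (Fin 3)) (w : ℕ → Fin 3) : Prop :=
  ∃ i : ℕ, u = (List.range u.length).map (fun j => w (i + j))

def SqFreeInf (w : ℕ → Fin 3) : Prop :=
  ∀ x : List (Fin 3), x ≠ [] → ¬ OccursInf (x ++ x) w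



/-- Thue–Morse sequence: parity of the number of 1 bits. -/
def tm : ℕ → Bool
  | 0 => false
  | n+1 => (((n+1) % 2 == 1) != tm ((n+1)/2))
decreasing_by exact Nat.div_lt_self (Nat.succ_pos n) one_lt_two

lemma tm_two_mul (n : ℕ) : tm (2*n) = tm n := by
  cases n with
  | zero => rfl
  | succ k =>
    show tm (2*k+1+1) = tm (k+1)
    rw [tm]
    have h1 : (2*k+1+1) % 2 = 0 := by omega
    have h2 : (2*k+1+1) / 2 = k+1 := by omega
    simp [h1, h2]

lemma tm_two_mul_add_one (n : ℕ) : tm (2*n+1) = ! tm n := by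
  show tm (2*n+1) = ! tm n
  rw [tm]
  have h1 : (2*n+1) % 2 = 1 := by omega
  have h2 : (2*n+1) / 2 = n := by omega
  simp [h1, h2, Bool.xor_comm]

lemma no_three (n : ℕ) : ¬ (tm n = tm (n+1) ∧ tm (n+1) = tm (n+2)) := by
  rcases Nat.even_or_odd n with ⟨c, hc⟩ | ⟨c, hc⟩
  · rintro ⟨h1, _⟩
    rw [show n = 2*c by omega] at h1
    rw [tm_two_mul, tm_two_mul_add_one] at h1
    simp at h1
  · rintro ⟨_, h2⟩
    rw [show n + 1 = 2*(c+1) by omega, show n + 2 = 2*(c+1)+1 by omega] at h2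
    rw [tm_two_mul, tm_two_mul_add_one] at h2
    simp at h2

lemma odd_step (q i c : ℕ) (H : ∀ x, i ≤ x → x ≤ i + (2*q+1) → tm x = tm (x + (2*q+1)))
    (h1 : i + 1 ≤ 2*(c+1)) (h2 : 2*(c+1) ≤ i + (2*q+1)) : tm (c+1) = tm c := by
  have hA := H (2*(c+1)) (by omega) (by omega)
  rw [show 2*(c+1) + (2*q+1) = 2*(c+q+1)+1 by ring, tm_two_mul, tm_two_mul_add_one] at hA
  have hB := H (2*c+1) (by omega) (by omega)
  rw [show 2*c+1 + (2*q+1) = 2*(c+q+1) by ring, show 2*c+1 = 2*c+1 from rfl,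
    tm_two_mul_add_one, tm_two_mul] at hB
  rw [hA, ← hB]
  simp

lemma tm_no_overlap : ∀ m, ∀ i, 0 < m → ¬ (∀ j ≤ m, tm (i+j) = tm (i+j+m)) := by
  intro m
  induction m using Nat.strong_induction_on with
  | _ m IH =>
    intro i hm H
    -- convenient form
    have H' : ∀ x, i ≤ x → x ≤ i + m → tm x = tm (x + m) := by
      intro x hx1 hx2
      have := H (x - i) (by omega)
      rwa [show i + (x - i) = x by omega] at this
    rcases Nat.even_or_odd m with ⟨k, hk⟩ | ⟨q, hq⟩
    · -- m = 2k even, k ≥ 1 : reduce to k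
      have hk' : m = 2*k := by omega
      have hkpos : 0 < k := by omega
      refine IH k (by omega) (i/2) hkpos ?_
      intro j hj
      rcases Nat.even_or_odd i with ⟨c, hc⟩ | ⟨c, hc⟩
      · have e1 := H' (i + 2*j) (by omega) (by omega)
        rw [show i + 2*j = 2*(c+j) by omega, show 2*(c+j) + m = 2*(c+j+k) by omega,
          tm_two_mul, tm_two_mul] at e1
        rw [show i/2 + j = c + j by omega, show c + j + k = c+j+k by rfl]
        exact e1
      · have e1 := H' (i + 2*j) (by omega) (by omega)
        rw [show i + 2*j = 2*(c+j)+1 by omega, show 2*(c+j)+1 + m = 2*(c+j+k)+1 by omega,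
          tm_two_mul_add_one, tm_two_mul_add_one] at e1
        rw [show i/2 + j = c + j by omega]
        simpa using e1
    · -- m = 2q+1 odd
      have hq' : m = 2*q+1 := by omega
      rw [hq'] at H'
      match q, hq' with
      | 0, hq' =>
        -- m = 1 : three consecutive equal
        have h0 := H 0 (by omega)
        have h1 := H 1 (by omega)
        simp only [Nat.add_zero] at h0
        rw [hq'] at h0 h1
        exact no_three i ⟨by simpa using h0, by simpa using h1⟩
      | 1, hq' =>
        -- m = 3 : direct computation
        rcases Nat.even_or_odd i with ⟨c, hc⟩ | ⟨c, hc⟩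
        · -- i even
          have p0 : tm (i+1) = ! tm i := by
            rw [show i = 2*c by omega, show 2*c+1 = 2*c+1 from rfl, tm_two_mul_add_one, tm_two_mul]
          have p2 : tm (i+3) = ! tm (i+2) := by
            rw [show i+2 = 2*(c+1) by omega, show i+3 = 2*(c+1)+1 by omega,
              tm_two_mul_add_one, tm_two_mul]
          have p4 : tm (i+5) = ! tm (i+4) := by
            rw [show i+4 = 2*(c+2) by omega, show i+5 = 2*(c+2)+1 by omega,
              tm_two_mul_add_one, tm_two_mul]
          have e0 := H' i (by omega) (by omega)
          have e1 := H' (i+1) (by omega) (by omega)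
          have e2 := H' (i+2) (by omega) (by omega)
          rw [show i + (2*1+1) = i+3 by omega] at e0
          rw [show i+1 + (2*1+1) = i+4 by omega] at e1
          rw [show i+2 + (2*1+1) = i+5 by omega] at e2
          -- tm(i+2) = !tm(i+3) = !tm i ; tm(i+4)=tm(i+1)=!tm i; tm(i+5)=!tm(i+4)=tm i; but tm(i+5)=tm(i+2)=!tm i
          rw [p4, ← e1, p0] at e2
          rw [e2] at p2
          rw [← e0] at p2
          revert p2; cases tm i <;> simp
        · -- i odd
          have p1 : tm (i+2) = ! tm (i+1) := by
            rw [show i+1 = 2*(c+1) by omega, show i+2 = 2*(c+1)+1 by omega,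
              tm_two_mul_add_one, tm_two_mul]
          have p3 : tm (i+4) = ! tm (i+3) := by
            rw [show i+3 = 2*(c+2) by omega, show i+4 = 2*(c+2)+1 by omega,
              tm_two_mul_add_one, tm_two_mul]
          have p5 : tm (i+6) = ! tm (i+5) := by
            rw [show i+5 = 2*(c+3) by omega, show i+6 = 2*(c+3)+1 by omega,
              tm_two_mul_add_one, tm_two_mul]
          have e0 := H' i (by omega) (by omega)
          have e1 := H' (i+1) (by omega) (by omega)
          have e2 := H' (i+2) (by omega) (by omega)
          have e3 := H' (i+3) (by omega) (by omega)
          rw [show i + (2*1+1) = i+3 by omega] at e0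
          rw [show i+1 + (2*1+1) = i+4 by omega] at e1
          rw [show i+2 + (2*1+1) = i+5 by omega] at e2
          rw [show i+3 + (2*1+1) = i+6 by omega] at e3
          rw [p5, ← e2, p1] at e3
          rw [p3, e3] at e1
          revert e1; cases tm (i+1) <;> simp
      | (r+2), hq' =>
        -- m = 2q+1 ≥ 5 : two consecutive evens trick
        set q := r + 2 with hqdef
        set c := i / 2 with hcdef
        have s1 : tm (c+1) = tm c := odd_step q i c H' (by omega) (by omega)
        have s2 : tm (c+2) = tm (c+1) := by
          have := odd_step q i (c+1) H' (by omega) (by omega)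
          simpa using this
        exact no_three c ⟨s1.symm, s2.symm⟩

def enc (p q : Bool) : Fin 3 := if p = q then 1 else if p then 0 else 2

def aseq (n : ℕ) : Fin 3 := enc (tm n) (tm (n+1))

lemma enc_inj1 : ∀ p q p' q' : Bool, enc p q = enc p' q' → p = p' → q = q' := by decide
lemma enc_inj2 : ∀ p q p' q' : Bool, enc p q = enc p' q' → p ≠ p' → (q = p ∧ q' = p') := by decide
lemma enc010 : ∀ p q r s : Bool, enc p q = 0 → enc q r = 1 → enc r s = 0 → False := by decide

lemma aseq_sf (m i : ℕ) (hm : 0 < m) (H : ∀ j < m, aseq (i+j) = aseq (i+j+m)) : False := by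
  by_cases h0 : tm i = tm (i+m)
  · have claim : ∀ j, j ≤ m → tm (i+j) = tm (i+j+m) := by
      intro j
      induction j with
      | zero => intro _; simpa using h0
      | succ j ih =>
        intro hj
        have e := enc_inj1 _ _ _ _ (H j (by omega)) (ih (by omega))
        rw [show i+j+1 = i+(j+1) by omega, show i+j+m+1 = i+(j+1)+m by omega] at e
        exact e
    exact tm_no_overlap m i hm claim
  · have claim2 : ∀ j, j ≤ m → tm (i+j) ≠ tm (i+j+m) := by
      intro j
      induction j with
      | zero => intro _; simpa using h0
      | succ j ih =>
        intro hj
        have hne := ih (by omega)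
        have e := enc_inj2 _ _ _ _ (H j (by omega)) hne
        rw [show i+j+1 = i+(j+1) by omega, show i+j+m+1 = i+(j+1)+m by omega] at e
        rw [e.1, e.2]
        exact hne
    have e0 := enc_inj2 _ _ _ _ (H 0 (by omega)) (by simpa using claim2 0 (by omega))
    simp only [Nat.add_zero] at e0
    rcases Nat.lt_or_ge m 2 with hm2 | hm2
    · -- m = 1
      have : m = 1 := by omega
      subst this
      exact absurd e0.1.symm (by simpa using h0)
    · have e1 := enc_inj2 _ _ _ _ (H 1 (by omega)) (claim2 1 (by omega))
      exact no_three i ⟨e0.1.symm, by rw [show i+1+1 = i+2 by omega] at e1; exact e1.1.symm⟩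

lemma aseq_no010 (i : ℕ) : ¬ (aseq i = 0 ∧ aseq (i+1) = 1 ∧ aseq (i+2) = 0) := by
  rintro ⟨h0, h1, h2⟩
  exact enc010 (tm i) (tm (i+1)) (tm (i+2)) (tm (i+3)) h0 h1 h2


theorem exists_inf_squarefree_avoiding_aba (a b : Fin 3) (hab : a ≠ b) :
    ∃ w : ℕ → Fin 3, SqFreeInf w ∧ ¬ OccursInf [a,b,a] w := by
  classical
  set π : Fin 3 → Fin 3 := ![a, b, -(a+b)] with hπ
  have hinj : Function.Injective π := by
    rw [hπ]; revert hab; fin_cases a <;> fin_cases b <;> decide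
  have hπ0 : π 0 = a := rfl
  have hπ1 : π 1 = b := rfl
  refine ⟨fun n => π (aseq n), ?_, ?_⟩
  · rintro x hx ⟨i, hi⟩
    set m := x.length with hm
    have hmpos : 0 < m := by
      cases x with
      | nil => exact absurd rfl hx
      | cons y ys => simp [hm]
    have hlen : (x ++ x).length = m + m := by simp [hm]
    have hget : ∀ k (hk : k < (x++x).length), (x++x)[k] = π (aseq (i+k)) := by
      intro k hk
      rw [List.getElem_of_eq hi hk]
      simp
    have key : ∀ j, j < m → π (aseq (i+j)) = π (aseq (i+j+m)) := by
      intro j hj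
      have hj1 : j < (x++x).length := by omega
      have hj2 : m + j < (x++x).length := by omega
      have a1 : (x++x)[j]'hj1 = x[j]'(by omega) := List.getElem_append_left _
      have a2 : (x++x)[m+j]'hj2 = x[j]'(by omega) := by
        rw [List.getElem_append_right (by omega)]
        congr 1
        omega
      have b1 := hget j hj1
      have b2 := hget (m+j) hj2
      rw [a1] at b1
      rw [a2] at b2
      rw [← b1, b2, show i+(m+j) = i+j+m by omega]
    exact aseq_sf m i hmpos (fun j hj => hinj (key j hj))
  · rintro ⟨i, hi⟩
    have h3 : List.range ([a,b,a].length) = [0,1,2] := rfl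
    rw [h3] at hi
    simp only [List.map_cons, List.map_nil, List.cons.injEq, and_true] at hi
    obtain ⟨h0, h1, h2⟩ := hi
    refine aseq_no010 i ⟨?_, ?_, ?_⟩
    · apply hinj; rw [hπ0, h0, Nat.add_zero]
    · apply hinj; rw [hπ1, h1]
    · apply hinj; rw [hπ0, h2]
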